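/- arXiv:1411.7439 — 4 statements merged into one kernel-verified Lean document; each statement's English description precedes it below -/
import Mathlib

section
/- Let τ_a > 0, N₀ ∈ ℕ, and let S ⊆ ℝ be a set of switching times such that for all real numbers 0 ≤ s < t the set S ∩ (s,t] is finite with cardinality at most N₀ + (t−s)/τ_a. Fix an initial time t₀ ≥ 0, let τ₀ ∈ (0, τ_a), and let m be a positive integer with m > (τ_a/(τ_a − τ₀))·(N₀ − τ₀/τ_a). Then there exists T ∈ [t₀, t₀ + (m−1)τ₀] such that S ∩ (T, T+τ₀] = ∅. -/
/-- Lemma 3.2 of the paper: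
`S` is the set of switching times of a signal satisfying the average dwell-time
condition with chatter bound `N₀` and average dwell time `τa`.  Then within
`[t₀, t₀ + (m-1)τ₀]` one can find `T` such that no switch occurs in `(T, T + τ₀]`. -/
theorem stmt_0 (τa : ℝ) (hτa : 0 < τa) (N₀ : ℕ) (S : Set ℝ)
    (hfin : ∀ s t : ℝ, 0 ≤ s → s < t → (S ∩ Set.Ioc s t).Finite)
    (hcard : ∀ s t : ℝ, 0 ≤ s → s < t →
      ((S ∩ Set.Ioc s t).ncard : ℝ) ≤ (N₀ : ℝ) + (t - s) / τa)
    (t₀ : ℝ) (ht₀ : 0 ≤ t₀) (τ₀ : ℝ) (hτ₀ : 0 < τ₀) (hτ₀' : τ₀ < τa)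
    (m : ℕ) (hm : 0 < m)
    (hm' : (m : ℝ) > τa / (τa - τ₀) * ((N₀ : ℝ) - τ₀ / τa)) :
    ∃ T : ℝ, T ∈ Set.Icc t₀ (t₀ + ((m : ℝ) - 1) * τ₀) ∧ S ∩ Set.Ioc T (T + τ₀) = ∅ := by
  classical
  by_contra hcon
  push_neg at hcon
  have hne : ∀ T, t₀ ≤ T → T ≤ t₀ + ((m:ℝ)-1)*τ₀ →
      (S ∩ Set.Ioc T (T+τ₀)).Nonempty := fun T h1 h2 => hcon T ⟨h1, h2⟩
  set g : ℝ → ℝ := fun T => if h : (S ∩ Set.Ioc T (T+τ₀)).Nonempty then h.choose else T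
    with hgdef
  have hg : ∀ T, (S ∩ Set.Ioc T (T+τ₀)).Nonempty →
      g T ∈ S ∧ T < g T ∧ g T ≤ T + τ₀ := by
    intro T h
    have hs := h.choose_spec
    simp only [hgdef, dif_pos h]
    exact ⟨hs.1, hs.2.1, hs.2.2⟩
  set f : ℕ → ℝ := fun k => g^[k] t₀ with hfdef
  have hf0 : f 0 = t₀ := rfl
  have hstep : ∀ k, f (k+1) = g (f k) := fun k => Function.iterate_succ_apply' g k t₀
  have hm1 : (1:ℝ) ≤ (m:ℝ) := by exact_mod_cast hm
  have hτd : 0 < τa - τ₀ := by linarith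
  -- bounds on f
  have hbound : ∀ n, n ≤ m → t₀ ≤ f n ∧ f n ≤ t₀ + n*τ₀ := by
    intro n hn
    induction n with
    | zero => simp [hf0]
    | succ k ih =>
      obtain ⟨h1, h2⟩ := ih (by omega)
      have hk1 : (k:ℝ) + 1 ≤ (m:ℝ) := by exact_mod_cast hn
      have hle : f k ≤ t₀ + ((m:ℝ)-1)*τ₀ := by nlinarith
      obtain ⟨_, hlt, hub⟩ := hg (f k) (hne (f k) h1 hle)
      rw [hstep]
      constructor
      · linarith
      · push_cast; linarith
  have hstepS : ∀ n, n < m → f (n+1) ∈ S ∧ f n < f (n+1) ∧ f (n+1) ≤ f n + τ₀ := by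
    intro n hn
    obtain ⟨h1, h2⟩ := hbound n (le_of_lt hn)
    have hn1 : (n:ℝ) + 1 ≤ (m:ℝ) := by exact_mod_cast hn
    have hle : f n ≤ t₀ + ((m:ℝ)-1)*τ₀ := by nlinarith
    have := hg (f n) (hne (f n) h1 hle)
    rw [hstep]; exact this
  -- strict monotonicity
  have hmono : ∀ j, j ≤ m → ∀ i, i < j → f i < f j := by
    intro j
    induction j with
    | zero => intro _ i h; omega
    | succ k ih =>
      intro hk i hi
      rcases Nat.lt_or_ge i k with h | h
      · exact (ih (by omega) i h).trans (hstepS k (by omega)).2.1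
      · have hik : i = k := by omega
        subst hik
        exact (hstepS i (by omega)).2.1
  have hle' : ∀ i j, i ≤ j → j ≤ m → f i ≤ f j := by
    intro i j hij hjm
    rcases eq_or_lt_of_le hij with h | h
    · rw [h]
    · exact (hmono j hjm i h).le
  -- f k ≤ f 1 + (k-1) τ₀
  have hub1 : ∀ k, 1 ≤ k → k ≤ m → f k ≤ f 1 + ((k:ℝ)-1)*τ₀ := by
    intro k hk1 hkm
    induction k with
    | zero => omega
    | succ n ih =>
      rcases Nat.eq_or_lt_of_le hk1 with h | h
      · have hn0 : n = 0 := by omega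
        subst hn0; norm_num
      · have hn1 : 1 ≤ n := by omega
        have h1 := ih hn1 (by omega)
        have h2 := (hstepS n (by omega)).2.2
        push_cast
        linarith
  set a := f 1 with hadef
  have ha : t₀ < a := by
    have := hmono 1 hm 0 Nat.zero_lt_one
    rwa [hf0] at this
  -- the margin δ
  have hA : (N₀:ℝ)*τa - τ₀ < m*(τa - τ₀) := by
    have h1 : τa/(τa-τ₀) * ((N₀:ℝ) - τ₀/τa) < m := hm'
    have h2 : τa/(τa-τ₀) * ((N₀:ℝ) - τ₀/τa) = ((N₀:ℝ)*τa - τ₀)/(τa-τ₀) := by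
      field_simp
    rw [h2, div_lt_iff₀ hτd] at h1
    linarith
  set δ : ℝ := (m:ℝ)*τa - (N₀:ℝ)*τa - ((m:ℝ)-1)*τ₀ with hδdef
  have hδ : 0 < δ := by simp only [hδdef]; nlinarith
  set ε : ℝ := min ((a - t₀)/2) (δ/2) with hεdef
  have hε0 : 0 < ε := lt_min (by linarith) (by linarith)
  have hεa : ε ≤ (a - t₀)/2 := min_le_left _ _
  have hεδ : ε ≤ δ/2 := min_le_right _ _
  have hs0 : 0 ≤ a - ε := by linarith
  have ham : a ≤ f m := hle' 1 m hm le_rfl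
  have hslt : a - ε < f m := by linarith
  have hAfin := hfin (a-ε) (f m) hs0 hslt
  -- the finset of m switches
  set F : Finset ℝ := (Finset.range m).image (fun k => f (k+1)) with hFdef
  have hsub : ↑F ⊆ S ∩ Set.Ioc (a-ε) (f m) := by
    intro x hx
    simp only [hFdef, Finset.coe_image, Finset.coe_range, Set.mem_image,
      Set.mem_Iio] at hx
    obtain ⟨k, hk, rfl⟩ := hx
    refine ⟨(hstepS k hk).1, ?_, ?_⟩
    · have : a ≤ f (k+1) := hle' 1 (k+1) (by omega) (by omega)
      linarith
    · exact hle' (k+1) m (by omega) le_rfl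
  have hcardF : F.card = m := by
    rw [hFdef, Finset.card_image_of_injOn, Finset.card_range]
    intro i hi j hj hij
    simp only [Finset.mem_coe, Finset.coe_range, Set.mem_Iio] at hi hj
    by_contra hne'
    rcases Nat.lt_or_ge i j with h | h
    · exact absurd hij (ne_of_lt (hmono (j+1) (by omega) (i+1) (by omega)))
    · have h' : j < i := by omega
      exact absurd hij.symm (ne_of_lt (hmono (i+1) (by omega) (j+1) (by omega)))
  have hcount : (m:ℝ) ≤ (N₀:ℝ) + (f m - (a - ε))/τa := by
    have h1 := hcard (a-ε) (f m) hs0 hslt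
    have h2 : m ≤ (S ∩ Set.Ioc (a-ε) (f m)).ncard := by
      calc m = F.card := hcardF.symm
        _ = (↑F : Set ℝ).ncard := (Set.ncard_coe_finset F).symm
        _ ≤ _ := Set.ncard_le_ncard hsub hAfin
    calc (m:ℝ) ≤ ((S ∩ Set.Ioc (a-ε) (f m)).ncard : ℝ) := by exact_mod_cast h2
      _ ≤ _ := h1
  have hfm : f m ≤ a + ((m:ℝ)-1)*τ₀ := hub1 m hm le_rfl
  have h3 : ((m:ℝ) - (N₀:ℝ)) * τa ≤ f m - a + ε := by
    have h4 : ((m:ℝ) - (N₀:ℝ)) ≤ (f m - (a - ε))/τa := by linarith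
    have h5 := (le_div_iff₀ hτa).1 h4
    linarith
  have : δ ≤ δ/2 := by
    simp only [hδdef] at hεδ ⊢
    nlinarith
  linarith
end

section
/- Let P, Q ∈ ℝ^{n×n} be symmetric positive definite and Ā, B̄ ∈ ℝ^{n×n} satisfy Āᵀ P Ā − P = −Q. Let κ > 1, θ ∈ (0,1), and set α = λ_min(Q)/κ and β = n·( (κ/(κ−1))·‖ĀᵀP B̄‖²/λ_min(Q) + ‖B̄ᵀ P B̄‖ ). Let ρ > β/(1−θ²) and ν = max{ 1 − α/λ_max(P), β/ρ + θ² }. Then ν < 1, and for all x, e ∈ ℝ^n and E ≥ 0 with |e|_∞ ≤ E, setting x₊ = Ā x + B̄ e and E₊ = θ E, one has x₊ᵀ P x₊ + ρ E₊² ≤ ν (xᵀ P x + ρ E²). -/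
open scoped Matrix

/-- The Euclidean norm `|v| = (vᵀ v)^{1/2}` of a vector `v ∈ ℝ^n`. -/
noncomputable def eNorm {n : ℕ} (v : Fin n → ℝ) : ℝ :=
  Real.sqrt (∑ i, v i ^ 2)

/-- The induced Euclidean (spectral) norm `‖M‖ = sup {|Mv| : |v| = 1}`. -/
noncomputable def opENorm {m n : ℕ} (M : Matrix (Fin m) (Fin n) ℝ) : ℝ :=
  sSup {c : ℝ | ∃ v : Fin n → ℝ, eNorm v = 1 ∧ c = eNorm (M.mulVec v)}

/-- The smallest eigenvalue of a (symmetric) real matrix. -/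
noncomputable def eigMin {n : ℕ} (Q : Matrix (Fin n) (Fin n) ℝ) : ℝ :=
  sInf {t : ℝ | ∃ v : Fin n → ℝ, v ≠ 0 ∧ Q.mulVec v = t • v}

/-- The largest eigenvalue of a (symmetric) real matrix. -/
noncomputable def eigMax {n : ℕ} (P : Matrix (Fin n) (Fin n) ℝ) : ℝ :=
  sSup {t : ℝ | ∃ v : Fin n → ℝ, v ≠ 0 ∧ P.mulVec v = t • v}

/-!
Expanding `(Āx + B̄e)ᵀP(Āx + B̄e)` with the Lyapunov equation gives
`xᵀPx - xᵀQx + 2 xᵀ(ĀᵀPB̄)e + eᵀ(B̄ᵀPB̄)e`. Young's inequality with weight `(1 - 1/κ) λ_min(Q)`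
absorbs the cross term into `xᵀQx ≥ λ_min(Q)|x|²`, and `|e|² ≤ n E²`, so the new value is at most
`xᵀPx - α|x|² + βE² ≤ (1 - α/λ_max(P)) xᵀPx + βE²`. Finally `βE² + ρθ²E² = (β/ρ + θ²) ρE²`,
and `ρ > β/(1 - θ²)` is exactly `β/ρ + θ² < 1`.

The eigenvalue bounds `λ_min(A)·1 ≤ A ≤ λ_max(A)·1` in the Loewner order come from the continuous
functional calculus, since the set of eigenvalues in `eigMin`/`eigMax` is the spectrum; `opENorm` is
Mathlib's L2 operator norm of matrices.
-/

theorem eigenvalueSet_eq_spectrum {K ι : Type*} [Field K] [Fintype ι] [DecidableEq ι]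
    (A : Matrix ι ι K) :
    {t : K | ∃ v : ι → K, v ≠ 0 ∧ A *ᵥ v = t • v} = spectrum K A := by
  ext t
  rw [← Matrix.spectrum_toLin', ← Module.End.hasEigenvalue_iff_mem_spectrum]
  constructor
  · rintro ⟨v, hv, hAv⟩
    exact Module.End.hasEigenvalue_of_hasEigenvector
      ⟨Module.End.mem_eigenspace_iff.2 (by simpa using hAv), hv⟩
  · intro h
    obtain ⟨v, hv, hv0⟩ := h.exists_hasEigenvector
    exact ⟨v, hv0, by simpa using Module.End.mem_eigenspace_iff.1 hv⟩

theorem mulVec_dotProduct_mulVec_mulVec {R ι : Type*} [CommSemiring R] [Fintype ι]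
    (A P B : Matrix ι ι R) (x y : ι → R) :
    A *ᵥ x ⬝ᵥ P *ᵥ (B *ᵥ y) = x ⬝ᵥ (Aᵀ * P * B) *ᵥ y := by
  rw [← Matrix.mulVec_mulVec, ← Matrix.mulVec_mulVec, Matrix.dotProduct_mulVec x,
    Matrix.vecMul_transpose]

theorem quadForm_mulVec_add_mulVec {R ι : Type*} [CommRing R] [Fintype ι]
    {P : Matrix ι ι R} (hP : Pᵀ = P) (A B : Matrix ι ι R) (x y : ι → R) :
    (A *ᵥ x + B *ᵥ y) ⬝ᵥ P *ᵥ (A *ᵥ x + B *ᵥ y) =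
      x ⬝ᵥ (Aᵀ * P * A) *ᵥ x + 2 * (x ⬝ᵥ (Aᵀ * P * B) *ᵥ y) + y ⬝ᵥ (Bᵀ * P * B) *ᵥ y := by
  have hcross : B *ᵥ y ⬝ᵥ P *ᵥ (A *ᵥ x) = A *ᵥ x ⬝ᵥ P *ᵥ (B *ᵥ y) := by
    rw [dotProduct_comm, Matrix.dotProduct_mulVec (A *ᵥ x), ← Matrix.mulVec_transpose, hP]
  simp only [Matrix.mulVec_add, dotProduct_add, add_dotProduct, hcross,
    mulVec_dotProduct_mulVec_mulVec]
  ring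

theorem two_mul_le_mul_sq_add_sq_div {a b c : ℝ} (hc : 0 < c) :
    2 * (a * b) ≤ c * a ^ 2 + b ^ 2 / c := by
  have key : c * a ^ 2 + b ^ 2 / c - 2 * (a * b) = (c * a - b) ^ 2 / c := by
    field_simp
    ring
  linarith [div_nonneg (sq_nonneg (c * a - b)) hc.le]

section EuclideanNorm

open scoped Matrix.Norms.L2Operator

variable {m n : ℕ}

theorem eNorm_eq_norm_toLp (v : Fin n → ℝ) : eNorm v = ‖WithLp.toLp 2 v‖ := by
  simp [eNorm, EuclideanSpace.norm_eq]

theorem eNorm_sq (v : Fin n → ℝ) : eNorm v ^ 2 = v ⬝ᵥ v := by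
  rw [eNorm, Real.sq_sqrt (by positivity)]
  simp only [dotProduct, sq]

theorem eNorm_sq_le_card_mul_norm_sq (v : Fin n → ℝ) : eNorm v ^ 2 ≤ n * ‖v‖ ^ 2 := by
  rw [eNorm, Real.sq_sqrt (by positivity)]
  calc ∑ i, v i ^ 2 ≤ ∑ _i : Fin n, ‖v‖ ^ 2 := by
        refine Finset.sum_le_sum fun i _ => ?_
        simpa only [Real.norm_eq_abs, sq_abs] using
          pow_le_pow_left₀ (norm_nonneg _) (norm_le_pi_norm v i) 2
    _ = n * ‖v‖ ^ 2 := by simp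

theorem dotProduct_le_eNorm_mul_eNorm (v w : Fin n → ℝ) : v ⬝ᵥ w ≤ eNorm v * eNorm w := by
  rw [eNorm_eq_norm_toLp, eNorm_eq_norm_toLp, dotProduct_comm]
  exact real_inner_le_norm (WithLp.toLp 2 v) (WithLp.toLp 2 w)

theorem opENorm_eq_l2_opNorm (M : Matrix (Fin m) (Fin n) ℝ) : opENorm M = ‖M‖ := by
  rw [Matrix.l2_opNorm_def, ← ContinuousLinearMap.sSup_sphere_eq_norm, opENorm]
  congr 1
  ext c
  constructor
  · rintro ⟨v, hv, rfl⟩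
    exact ⟨WithLp.toLp 2 v, by simpa [eNorm_eq_norm_toLp] using hv, by simp [eNorm_eq_norm_toLp]⟩
  · rintro ⟨x, hx, rfl⟩
    exact ⟨x.ofLp, by simpa [eNorm_eq_norm_toLp] using hx, by rw [eNorm_eq_norm_toLp]; rfl⟩

theorem opENorm_nonneg (M : Matrix (Fin m) (Fin n) ℝ) : 0 ≤ opENorm M :=
  opENorm_eq_l2_opNorm M ▸ norm_nonneg M

theorem eNorm_mulVec_le (M : Matrix (Fin m) (Fin n) ℝ) (v : Fin n → ℝ) :
    eNorm (M *ᵥ v) ≤ opENorm M * eNorm v := by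
  rw [opENorm_eq_l2_opNorm, eNorm_eq_norm_toLp, eNorm_eq_norm_toLp]
  exact M.l2_opNorm_mulVec (WithLp.toLp 2 v)

theorem dotProduct_mulVec_le_opENorm_mul (M : Matrix (Fin m) (Fin n) ℝ) (x : Fin m → ℝ)
    (y : Fin n → ℝ) : x ⬝ᵥ M *ᵥ y ≤ eNorm x * (opENorm M * eNorm y) :=
  (dotProduct_le_eNorm_mul_eNorm x _).trans
    (mul_le_mul_of_nonneg_left (eNorm_mulVec_le M y) (Real.sqrt_nonneg _))

end EuclideanNorm

section Rayleigh

open scoped MatrixOrder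

variable {n : ℕ} {A : Matrix (Fin n) (Fin n) ℝ}

theorem eigMin_eq_sInf_spectrum (A : Matrix (Fin n) (Fin n) ℝ) :
    eigMin A = sInf (spectrum ℝ A) := by
  rw [eigMin, eigenvalueSet_eq_spectrum]

theorem eigMax_eq_sSup_spectrum (A : Matrix (Fin n) (Fin n) ℝ) :
    eigMax A = sSup (spectrum ℝ A) := by
  rw [eigMax, eigenvalueSet_eq_spectrum]

theorem dotProduct_mulVec_le_of_le {B : Matrix (Fin n) (Fin n) ℝ} (h : A ≤ B) (v : Fin n → ℝ) :
    v ⬝ᵥ A *ᵥ v ≤ v ⬝ᵥ B *ᵥ v := by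
  have := (Matrix.le_iff.1 h).dotProduct_mulVec_nonneg v
  rwa [star_trivial, Matrix.sub_mulVec, dotProduct_sub, sub_nonneg] at this

theorem dotProduct_algebraMap_mulVec (r : ℝ) (v : Fin n → ℝ) :
    v ⬝ᵥ algebraMap ℝ (Matrix (Fin n) (Fin n) ℝ) r *ᵥ v = r * eNorm v ^ 2 := by
  rw [Algebra.algebraMap_eq_smul_one, Matrix.smul_mulVec, Matrix.one_mulVec, dotProduct_smul,
    smul_eq_mul, eNorm_sq]

theorem eigMin_mul_eNorm_sq_le (hA : A.IsHermitian) (v : Fin n → ℝ) :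
    eigMin A * eNorm v ^ 2 ≤ v ⬝ᵥ A *ᵥ v := by
  have hle : algebraMap ℝ _ (eigMin A) ≤ A :=
    (algebraMap_le_iff_le_spectrum hA.isSelfAdjoint).2 fun t ht =>
      eigMin_eq_sInf_spectrum A ▸ csInf_le A.finite_real_spectrum.bddBelow ht
  simpa only [dotProduct_algebraMap_mulVec] using dotProduct_mulVec_le_of_le hle v

theorem dotProduct_mulVec_le_eigMax_mul (hA : A.IsHermitian) (v : Fin n → ℝ) :
    v ⬝ᵥ A *ᵥ v ≤ eigMax A * eNorm v ^ 2 := by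
  have hle : A ≤ algebraMap ℝ _ (eigMax A) :=
    (le_algebraMap_iff_spectrum_le hA.isSelfAdjoint).2 fun t ht =>
      eigMax_eq_sSup_spectrum A ▸ le_csSup A.finite_real_spectrum.bddAbove ht
  simpa only [dotProduct_algebraMap_mulVec] using dotProduct_mulVec_le_of_le hle v

theorem eigMin_pos (hn : 0 < n) (hA : A.PosDef) : 0 < eigMin A := by
  have : Nonempty (Fin n) := ⟨⟨0, hn⟩⟩
  rw [eigMin_eq_sInf_spectrum, hA.1.spectrum_real_eq_range_eigenvalues]
  obtain ⟨i, hi⟩ := (Set.range_nonempty _).csInf_mem (Set.finite_range hA.1.eigenvalues)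
  exact hi ▸ hA.eigenvalues_pos i

theorem eigMax_pos (hn : 0 < n) (hA : A.PosDef) : 0 < eigMax A := by
  rw [eigMax_eq_sSup_spectrum]
  exact (hA.eigenvalues_pos ⟨0, hn⟩).trans_le
    (le_csSup A.finite_real_spectrum.bddAbove (hA.1.eigenvalues_mem_spectrum_real _))

end Rayleigh

theorem lyapunov_quadForm_step_le {n : ℕ} (hn : 0 < n) {P Q A B : Matrix (Fin n) (Fin n) ℝ}
    (hP : P.PosDef) (hQ : Q.PosDef) (hLyap : Aᵀ * P * A - P = -Q) {κ : ℝ} (hκ : 1 < κ)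
    (x e : Fin n → ℝ) :
    (A *ᵥ x + B *ᵥ e) ⬝ᵥ P *ᵥ (A *ᵥ x + B *ᵥ e) ≤
      x ⬝ᵥ P *ᵥ x - eigMin Q / κ * eNorm x ^ 2 +
        (κ / (κ - 1) * opENorm (Aᵀ * P * B) ^ 2 / eigMin Q + opENorm (Bᵀ * P * B)) *
          eNorm e ^ 2 := by
  set l := eigMin Q
  have hl : 0 < l := eigMin_pos hn hQ
  have hc : 0 < l - l / κ := by
    rw [sub_pos, div_lt_iff₀ (by linarith)]
    nlinarith
  have hPt : Pᵀ = P := by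
    simpa only [Matrix.conjTranspose_eq_transpose_of_trivial] using hP.1.eq
  have hAPA : Aᵀ * P * A = P - Q := by
    rw [sub_eq_iff_eq_add.1 hLyap]
    abel
  have hcross : 2 * (x ⬝ᵥ (Aᵀ * P * B) *ᵥ e) ≤ (l - l / κ) * eNorm x ^ 2 +
      κ / (κ - 1) * opENorm (Aᵀ * P * B) ^ 2 / l * eNorm e ^ 2 :=
    calc 2 * (x ⬝ᵥ (Aᵀ * P * B) *ᵥ e)
        ≤ 2 * (eNorm x * (opENorm (Aᵀ * P * B) * eNorm e)) := by
          gcongr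
          exact dotProduct_mulVec_le_opENorm_mul _ x e
      _ ≤ (l - l / κ) * eNorm x ^ 2 + (opENorm (Aᵀ * P * B) * eNorm e) ^ 2 / (l - l / κ) :=
          two_mul_le_mul_sq_add_sq_div hc
      _ = _ := by
          have : κ - 1 ≠ 0 := by linarith
          field_simp
  have hB := dotProduct_mulVec_le_opENorm_mul (Bᵀ * P * B) e e
  rw [quadForm_mulVec_add_mulVec hPt, hAPA, Matrix.sub_mulVec, dotProduct_sub]
  linarith [eigMin_mul_eNorm_sq_le hQ.1 x]

theorem max_lt_one_of_div_lt {α c β ρ θ : ℝ} (hα : 0 < α) (hc : 0 < c) (hθ : θ ^ 2 < 1)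
    (hρ : β / (1 - θ ^ 2) < ρ) (hρ0 : 0 < ρ) : max (1 - α / c) (β / ρ + θ ^ 2) < 1 := by
  have hβρ : β / ρ < 1 - θ ^ 2 := by
    rw [div_lt_iff₀ hρ0]
    rw [div_lt_iff₀ (by linarith)] at hρ
    linarith
  exact max_lt (by linarith [div_pos hα hc]) (by linarith)

theorem lyapunov_contraction_of_decrease {V V' s c α β ρ θ ν E : ℝ} (hV : 0 ≤ V)
    (hVs : V ≤ c * s) (hc : 0 < c) (hα : 0 ≤ α) (hρ : 0 < ρ)
    (hdecr : V' ≤ V - α * s + β * E ^ 2) (hν₁ : 1 - α / c ≤ ν) (hν₂ : β / ρ + θ ^ 2 ≤ ν) :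
    V' + ρ * (θ * E) ^ 2 ≤ ν * (V + ρ * E ^ 2) := by
  have hαs : α / c * V ≤ α * s := by
    rw [div_mul_eq_mul_div, div_le_iff₀ hc]
    nlinarith
  have hV' : (1 - α / c) * V ≤ ν * V := mul_le_mul_of_nonneg_right hν₁ hV
  have hE : (β / ρ + θ ^ 2) * (ρ * E ^ 2) ≤ ν * (ρ * E ^ 2) :=
    mul_le_mul_of_nonneg_right hν₂ (by positivity)
  have hsplit : (β / ρ + θ ^ 2) * (ρ * E ^ 2) = β * E ^ 2 + ρ * (θ * E) ^ 2 := by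
    field_simp
  linarith

/-- contraction of the Lyapunov function `V(x,E) = xᵀPx + ρE²`
over one quantization cycle without switching: `ν < 1` and
`V(x₊, θE) ≤ ν V(x, E)` whenever `|e|_∞ ≤ E` and `x₊ = Ā x + B̄ e`.
(The norm `‖·‖` on `Fin n → ℝ` is the sup norm `|·|_∞`.) -/
theorem stmt_6 (n : ℕ) (hn : 0 < n) (P Q Ab Bb : Matrix (Fin n) (Fin n) ℝ)
    (hP : P.PosDef) (hQ : Q.PosDef) (hLyap : Abᵀ * P * Ab - P = -Q)
    (κ θ : ℝ) (hκ : 1 < κ) (hθ0 : 0 < θ) (hθ1 : θ < 1)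
    (α β ρ ν : ℝ)
    (hα : α = eigMin Q / κ)
    (hβ : β = (n : ℝ) *
      (κ / (κ - 1) * opENorm (Abᵀ * P * Bb) ^ 2 / eigMin Q + opENorm (Bbᵀ * P * Bb)))
    (hρ : ρ > β / (1 - θ ^ 2))
    (hν : ν = max (1 - α / eigMax P) (β / ρ + θ ^ 2)) :
    ν < 1 ∧
      ∀ (x e : Fin n → ℝ) (E : ℝ), 0 ≤ E → ‖e‖ ≤ E →
        dotProduct (Ab.mulVec x + Bb.mulVec e)
            (P.mulVec (Ab.mulVec x + Bb.mulVec e)) + ρ * (θ * E) ^ 2 ≤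
          ν * (dotProduct x (P.mulVec x) + ρ * E ^ 2) := by
  set c := κ / (κ - 1) * opENorm (Abᵀ * P * Bb) ^ 2 / eigMin Q + opENorm (Bbᵀ * P * Bb)
  have hl : 0 < eigMin Q := eigMin_pos hn hQ
  have hPmax : 0 < eigMax P := eigMax_pos hn hP
  have hκ1 : 0 < κ - 1 := by linarith
  have hα0 : 0 < α := hα ▸ div_pos hl (by linarith)
  have hc0 : 0 ≤ c := by
    have := opENorm_nonneg (Bbᵀ * P * Bb)
    positivity
  have hρ0 : 0 < ρ := (div_nonneg (hβ ▸ by positivity) (by nlinarith)).trans_lt hρ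
  refine ⟨hν ▸ max_lt_one_of_div_lt hα0 hPmax (by nlinarith) hρ hρ0, fun x e E hE he => ?_⟩
  have he2 : eNorm e ^ 2 ≤ n * E ^ 2 :=
    (eNorm_sq_le_card_mul_norm_sq e).trans (by gcongr)
  refine lyapunov_contraction_of_decrease
    (by simpa using hP.posSemidef.dotProduct_mulVec_nonneg x)
    (dotProduct_mulVec_le_eigMax_mul hP.1 x) hPmax hα0.le hρ0 ?_
    (hν ▸ le_max_left _ _) (hν ▸ le_max_right _ _)
  calc _ ≤ x ⬝ᵥ P *ᵥ x - α * eNorm x ^ 2 + c * eNorm e ^ 2 :=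
        hα ▸ lyapunov_quadForm_step_le hn hP hQ hLyap hκ x e
    _ ≤ x ⬝ᵥ P *ᵥ x - α * eNorm x ^ 2 + β * E ^ 2 := by
        rw [hβ, mul_comm (n : ℝ), mul_assoc]
        gcongr
end

section
/- Let A_p, A_q ∈ ℝ^{n×n}, B_p, B_q ∈ ℝ^{n×m}, K_p ∈ ℝ^{m×n}, and set H = (A_q − A_p) + (B_q − B_p)K_p. Let τ_s > 0, let k ≥ 1 be an integer, and let T ∈ ((k−1)τ_s, kτ_s]; write τ = T − (k−1)τ_s ∈ (0, τ_s]. Let ξ₀ ∈ ℝ^n and ξ(t) = e^{(A_p+B_pK_p)t} ξ₀. Suppose e : ℝ → ℝ^n is continuous, differentiable on [0,T] with e'(t) = A_p e(t), and differentiable on [T, kτ_s] with e'(t) = A_q e(t) + H ξ(t). Then e(kτ_s) = e^{A_q(τ_s−τ)} e^{A_p((k−1)τ_s+τ)} e(0) + (∫_τ^{τ_s} e^{A_q(τ_s−t)} H e^{(A_p+B_pK_p)(t+(k−1)τ_s)} dt) · ξ₀. Consequently, if |e(0)|_∞ ≤ E, then |e(kτ_s)|_∞ ≤ δ̄ |ξ₀|_∞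 + γ̄′ E, where δ̄ = sup_{0≤τ′≤τ_s} ‖∫_{τ′}^{τ_s} e^{A_q(τ_s−t)} H e^{(A_p+B_pK_p)(t+(k−1)τ_s)} dt‖_∞ and γ̄′ = sup_{0≤τ′≤τ_s} ‖e^{A_q(τ_s−τ′)} e^{A_p((k−1)τ_s+τ′)}‖_∞. -/
/-!
On `[0, T]` the error solves `e' = A_p e`, so `e(T) = e^{A_p T} e(0)`. On `[T, kτ_s]` it
solves `e' = A_q e + H ξ`, and variation of constants gives
`e(kτ_s) = e^{A_q (kτ_s - T)} e(T) + ∫_T^{kτ_s} e^{A_q (kτ_s - s)} H ξ(s) ds`: since `A_q`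
commutes with its exponential, `d/du [e^{A_q (b - u)} e(u)] = e^{A_q (b - u)} H ξ(u)`.
The shift `s = t + (k-1)τ_s` turns this into the stated formula. For the bound, the two
matrices in the formula belong to families depending continuously on `τ ∈ [0, τ_s]`, so their
induced norms are at most the (finite) suprema `γ̄'` and `δ̄`.
-/

open scoped Matrix

attribute [local instance] Matrix.normedAddCommGroup Matrix.normedSpace

/-- The induced maximum-norm of a real matrix:
`‖M‖_∞ = sup {|Mv|_∞ : |v|_∞ = 1}`, where the norm on `Fin n → ℝ` is the sup norm. -/
noncomputable def opInfNorm {m n : ℕ} (M : Matrix (Fin m) (Fin n) ℝ) : ℝ :=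
  sSup {c : ℝ | ∃ v : Fin n → ℝ, ‖v‖ = 1 ∧ c = ‖M.mulVec v‖}

open NormedSpace Set

theorem hasDerivAt_exp_sub_smul {𝔸 : Type*} [NormedRing 𝔸] [NormedAlgebra ℝ 𝔸]
    [CompleteSpace 𝔸] (x : 𝔸) (b t : ℝ) :
    HasDerivAt (fun u : ℝ => exp ((b - u) • x)) (-(x * exp ((b - t) • x))) t := by
  have h := (hasDerivAt_exp_smul_const' (𝕂 := ℝ) x (b - t)).scomp t
    ((hasDerivAt_id t).const_sub b)
  rwa [neg_one_smul] at h

theorem continuous_intervalIntegral_left {E : Type*} [NormedAddCommGroup E] [NormedSpace ℝ E]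
    {f : ℝ → E} (hf : ∀ a b, IntervalIntegrable f MeasureTheory.volume a b)
    (b : ℝ) : Continuous fun a => ∫ t in a..b, f t := by
  simp only [intervalIntegral.integral_symm b]
  exact (intervalIntegral.continuous_primitive hf b).neg

theorem eq_exp_smul_apply_add_integral_of_hasDerivWithinAt {E : Type*} [NormedAddCommGroup E]
    [NormedSpace ℝ E] [CompleteSpace E] (A : E →L[ℝ] E) {x g : ℝ → E} {a b : ℝ}
    (hab : a ≤ b) (hg : ContinuousOn g (Icc a b))
    (hx : ∀ t ∈ Icc a b, HasDerivWithinAt x (A (x t) + g t) (Icc a b) t) :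
    x b = exp ((b - a) • A) (x a) + ∫ s in a..b, exp ((b - s) • A) (g s) := by
  have hexp : Continuous fun u : ℝ => exp ((b - u) • A) :=
    continuous_iff_continuousAt.2 fun t => (hasDerivAt_exp_sub_smul A b t).continuousAt
  have hderiv : ∀ t ∈ Ioo a b, HasDerivAt (fun u => exp ((b - u) • A) (x u))
      (exp ((b - t) • A) (g t)) t := by
    intro t ht
    have hcomm : A * exp ((b - t) • A) = exp ((b - t) • A) * A :=
      ((Commute.refl A).smul_right (b - t)).exp_right.eq
    convert (hasDerivAt_exp_sub_smul A b t).clm_apply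
      ((hx t (Ioo_subset_Icc_self ht)).hasDerivAt (Icc_mem_nhds ht.1 ht.2)) using 1
    rw [hcomm, map_add]
    simp
  have hxc : ContinuousOn x (Icc a b) := fun t ht => (hx t ht).continuousWithinAt
  have hftc := intervalIntegral.integral_eq_sub_of_hasDerivAt_of_le hab
    (hexp.continuousOn.clm_apply hxc) hderiv
    ((hexp.continuousOn.clm_apply hg).intervalIntegrable_of_Icc hab)
  simp only [sub_self, zero_smul, exp_zero] at hftc
  rw [hftc]
  simp

namespace Matrix

theorem integral_mulVec {m n : Type*} [Fintype m] [Fintype n] {f : ℝ → Matrix m n ℝ}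
    (hf : Continuous f) (a b : ℝ) (v : n → ℝ) :
    (∫ t in a..b, f t) *ᵥ v = ∫ t in a..b, f t *ᵥ v :=
  ((LinearMap.toContinuousLinearMap ((mulVecBilin ℝ ℝ).flip v)).intervalIntegral_comp_comm
    (hf.intervalIntegrable a b)).symm

section Exp

variable {ι : Type*} [Fintype ι] [DecidableEq ι]

noncomputable def toEndCLM : Matrix ι ι ℝ ≃ₐ[ℝ] ((ι → ℝ) →L[ℝ] (ι → ℝ)) :=
  Matrix.toLinAlgEquiv'.trans (Module.End.toContinuousLinearMap (ι → ℝ))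

theorem toEndCLM_apply (M : Matrix ι ι ℝ) (v : ι → ℝ) : toEndCLM M v = M *ᵥ v := rfl

open scoped Matrix.Norms.Operator in
theorem toEndCLM_exp (M : Matrix ι ι ℝ) : toEndCLM (exp M) = exp (toEndCLM M) :=
  map_exp _ (by exact LinearMap.continuous_of_finiteDimensional toEndCLM.toLinearMap) M

@[fun_prop]
theorem _root_.Continuous.matrix_exp_smul {α : Type*} [TopologicalSpace α] {f : α → ℝ}
    (hf : Continuous f) (M : Matrix ι ι ℝ) : Continuous fun x => exp (f x • M) := by
  open scoped Matrix.Norms.Operator in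
  fun_prop

theorem eq_exp_smul_mulVec_add_integral_of_hasDerivWithinAt (M : Matrix ι ι ℝ)
    {x g : ℝ → ι → ℝ} {a b : ℝ} (hab : a ≤ b) (hg : ContinuousOn g (Icc a b))
    (hx : ∀ t ∈ Icc a b, HasDerivWithinAt x (M *ᵥ x t + g t) (Icc a b) t) :
    x b = exp ((b - a) • M) *ᵥ x a + ∫ s in a..b, exp ((b - s) • M) *ᵥ g s := by
  have hexp : ∀ (c : ℝ) v, exp (c • M) *ᵥ v = exp (c • toEndCLM M) v := fun c v => by
    rw [← map_smul, ← toEndCLM_exp, toEndCLM_apply]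
  simp only [hexp]
  exact eq_exp_smul_apply_add_integral_of_hasDerivWithinAt (toEndCLM M) hab hg hx

theorem eq_exp_mulVec_add_integral_of_switch (A₁ A₂ H F : Matrix ι ι ℝ) (ξ₀ : ι → ℝ)
    {e : ℝ → ι → ℝ} {T b : ℝ} (hT : 0 ≤ T) (hTb : T ≤ b)
    (he₁ : ∀ t ∈ Icc 0 T, HasDerivWithinAt e (A₁ *ᵥ e t) (Icc 0 T) t)
    (he₂ : ∀ t ∈ Icc T b,
      HasDerivWithinAt e (A₂ *ᵥ e t + H *ᵥ (exp (t • F) *ᵥ ξ₀)) (Icc T b) t) :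
    e b = (exp ((b - T) • A₂) * exp (T • A₁)) *ᵥ e 0 +
      (∫ s in T..b, exp ((b - s) • A₂) * H * exp (s • F)) *ᵥ ξ₀ := by
  have he_T : e T = exp (T • A₁) *ᵥ e 0 := by
    simpa using eq_exp_smul_mulVec_add_integral_of_hasDerivWithinAt A₁ (g := 0) hT
      continuousOn_const (by simpa using he₁)
  have hg : Continuous fun t : ℝ => H *ᵥ (exp (t • F) *ᵥ ξ₀) := by fun_prop
  rw [eq_exp_smul_mulVec_add_integral_of_hasDerivWithinAt A₂ hTb hg.continuousOn he₂, he_T,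
    mulVec_mulVec, integral_mulVec (by fun_prop)]
  congr 1
  refine intervalIntegral.integral_congr fun s _ => ?_
  simp only [mulVec_mulVec, Matrix.mul_assoc]

end Exp

end Matrix

section opInfNorm

variable {m n : ℕ}

theorem opInfNorm_eq_norm_toContinuousLinearMap (M : Matrix (Fin m) (Fin n) ℝ) :
    opInfNorm M = ‖LinearMap.toContinuousLinearMap (Matrix.toLin' M)‖ := by
  rw [← ContinuousLinearMap.sSup_sphere_eq_norm, opInfNorm]
  congr 1
  refine Set.ext fun c => ?_
  simp [eq_comm]

theorem opInfNorm_nonneg (M : Matrix (Fin m) (Fin n) ℝ) : 0 ≤ opInfNorm M :=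
  opInfNorm_eq_norm_toContinuousLinearMap M ▸ norm_nonneg _

theorem norm_mulVec_le_opInfNorm_mul (M : Matrix (Fin m) (Fin n) ℝ) (v : Fin n → ℝ) :
    ‖M *ᵥ v‖ ≤ opInfNorm M * ‖v‖ :=
  opInfNorm_eq_norm_toContinuousLinearMap M ▸
    (LinearMap.toContinuousLinearMap (Matrix.toLin' M)).le_opNorm v

theorem continuous_opInfNorm : Continuous (opInfNorm : Matrix (Fin m) (Fin n) ℝ → ℝ) := by
  simp only [funext opInfNorm_eq_norm_toContinuousLinearMap]
  exact continuous_norm.comp (LinearMap.continuous_of_finiteDimensional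
    (Matrix.toLin'.trans LinearMap.toContinuousLinearMap :
      Matrix (Fin m) (Fin n) ℝ ≃ₗ[ℝ] (Fin n → ℝ) →L[ℝ] Fin m → ℝ).toLinearMap :)

theorem norm_mulVec_add_mulVec_le {M N : Matrix (Fin m) (Fin n) ℝ} {v w : Fin n → ℝ}
    {γ δ E : ℝ} (hM : opInfNorm M ≤ γ) (hN : opInfNorm N ≤ δ) (hv : ‖v‖ ≤ E) :
    ‖M *ᵥ v + N *ᵥ w‖ ≤ δ * ‖w‖ + γ * E := by
  rw [add_comm (δ * _)]
  refine (norm_add_le _ _).trans (add_le_add ?_ ?_)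
  · exact (norm_mulVec_le_opInfNorm_mul M v).trans
      (mul_le_mul hM hv (norm_nonneg v) ((opInfNorm_nonneg M).trans hM))
  · exact (norm_mulVec_le_opInfNorm_mul N w).trans
      (mul_le_mul_of_nonneg_right hN (norm_nonneg w))

theorem opInfNorm_le_iSup_Icc {f : ℝ → Matrix (Fin m) (Fin n) ℝ} (hf : Continuous f)
    {a b t : ℝ} (ht : t ∈ Icc a b) : opInfNorm (f t) ≤ ⨆ s : Icc a b, opInfNorm (f s) :=
  le_ciSup (isCompact_range ((continuous_opInfNorm.comp hf).comp continuous_subtype_val)).bddAbove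
    ⟨t, ht⟩

end opInfNorm

theorem stmt_7_general (n m : ℕ) (Ap Aq : Matrix (Fin n) (Fin n) ℝ)
    (Bp : Matrix (Fin n) (Fin m) ℝ) (Kp : Matrix (Fin m) (Fin n) ℝ)
    (H : Matrix (Fin n) (Fin n) ℝ)
    (τs : ℝ) (hτs : 0 < τs) (k : ℕ) (hk : 1 ≤ k)
    (T τ : ℝ) (hT1 : ((k : ℝ) - 1) * τs < T) (hT2 : T ≤ (k : ℝ) * τs)
    (hτ : τ = T - ((k : ℝ) - 1) * τs)
    (ξ₀ : Fin n → ℝ) (ξ : ℝ → Fin n → ℝ)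
    (hξ : ∀ t : ℝ, ξ t = (NormedSpace.exp (t • (Ap + Bp * Kp))).mulVec ξ₀)
    (e : ℝ → Fin n → ℝ)
    (he1 : ∀ t ∈ Set.Icc (0 : ℝ) T,
      HasDerivWithinAt e (Ap.mulVec (e t)) (Set.Icc (0 : ℝ) T) t)
    (he2 : ∀ t ∈ Set.Icc T ((k : ℝ) * τs),
      HasDerivWithinAt e (Aq.mulVec (e t) + H.mulVec (ξ t)) (Set.Icc T ((k : ℝ) * τs)) t)
    (E : ℝ) (δb γb : ℝ)
    (hδ : δb = ⨆ τ' : Set.Icc (0 : ℝ) τs, opInfNorm (∫ t in (τ' : ℝ)..τs,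
      NormedSpace.exp ((τs - t) • Aq) * H *
        NormedSpace.exp ((t + ((k : ℝ) - 1) * τs) • (Ap + Bp * Kp))))
    (hγ : γb = ⨆ τ' : Set.Icc (0 : ℝ) τs, opInfNorm (NormedSpace.exp ((τs - (τ' : ℝ)) • Aq) *
        NormedSpace.exp ((((k : ℝ) - 1) * τs + (τ' : ℝ)) • Ap))) :
    e ((k : ℝ) * τs) =
      (NormedSpace.exp ((τs - τ) • Aq) *
        NormedSpace.exp ((((k : ℝ) - 1) * τs + τ) • Ap)).mulVec (e 0) +
      (∫ t in τ..τs, NormedSpace.exp ((τs - t) • Aq) * H *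
        NormedSpace.exp ((t + ((k : ℝ) - 1) * τs) • (Ap + Bp * Kp))).mulVec ξ₀ ∧
    (‖e 0‖ ≤ E → ‖e ((k : ℝ) * τs)‖ ≤ δb * ‖ξ₀‖ + γb * E) := by
  have hk' : (1 : ℝ) ≤ k := by exact_mod_cast hk
  have hT0 : 0 ≤ T := by nlinarith
  have hτ_mem : τ ∈ Icc 0 τs := ⟨by linarith, by nlinarith⟩
  have hΦ : Continuous fun t : ℝ =>
      exp ((τs - t) • Aq) * exp (((k - 1) * τs + t) • Ap) := by
    fun_prop
  have hΨ : Continuous fun t : ℝ =>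
      exp ((τs - t) • Aq) * H * exp ((t + (k - 1) * τs) • (Ap + Bp * Kp)) := by
    fun_prop
  have hshift : ∫ s in T..k * τs, exp ((k * τs - s) • Aq) * H * exp (s • (Ap + Bp * Kp)) =
      ∫ t in τ..τs,
        exp ((τs - t) • Aq) * H * exp ((t + (k - 1) * τs) • (Ap + Bp * Kp)) := by
    have h := intervalIntegral.integral_comp_add_right (a := τ) (b := τs)
      (fun s => exp ((k * τs - s) • Aq) * H * exp (s • (Ap + Bp * Kp))) ((k - 1) * τs)
    rw [show τ + (k - 1) * τs = T by linarith, show τs + (k - 1) * τs = k * τs by ring] at h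
    rw [← h]
    refine intervalIntegral.integral_congr fun t _ => ?_
    simp only [show k * τs - (t + (k - 1) * τs) = τs - t by ring]
  have hformula := Matrix.eq_exp_mulVec_add_integral_of_switch Ap Aq H (Ap + Bp * Kp) ξ₀ hT0 hT2
    he1 (fun t ht => hξ t ▸ he2 t ht)
  rw [hshift, show k * τs - T = τs - τ by linarith, show T = (k - 1) * τs + τ by linarith]
    at hformula
  refine ⟨hformula, fun hE => ?_⟩
  rw [hformula, hγ, hδ]
  exact norm_mulVec_add_mulVec_le (opInfNorm_le_iSup_Icc hΦ hτ_mem)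
    (opInfNorm_le_iSup_Icc (continuous_intervalIntegral_left
      (fun _ _ => hΨ.intervalIntegrable _ _) τs) hτ_mem) hE

/-- Lemma 4.1 of the paper: behaviour of the estimation error
`e = x - ξ` when the plant switches from mode `p` to mode `q` at time
`T ∈ ((k-1)τs, kτs]` while the controller stays in mode `p`; explicit formula
for `e(kτs)` and the resulting bound `|e(kτs)|_∞ ≤ δ̄ |ξ₀|_∞ + γ̄' E`.
(The norm `‖·‖` on `Fin n → ℝ` is the sup norm `|·|_∞`; `NormedSpace.exp ℝ` is
the matrix exponential.) -/
theorem stmt_7 (n m : ℕ) (Ap Aq : Matrix (Fin n) (Fin n) ℝ)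
    (Bp Bq : Matrix (Fin n) (Fin m) ℝ) (Kp : Matrix (Fin m) (Fin n) ℝ)
    (H : Matrix (Fin n) (Fin n) ℝ) (hH : H = (Aq - Ap) + (Bq - Bp) * Kp)
    (τs : ℝ) (hτs : 0 < τs) (k : ℕ) (hk : 1 ≤ k)
    (T τ : ℝ) (hT1 : ((k : ℝ) - 1) * τs < T) (hT2 : T ≤ (k : ℝ) * τs)
    (hτ : τ = T - ((k : ℝ) - 1) * τs)
    (ξ₀ : Fin n → ℝ) (ξ : ℝ → Fin n → ℝ)
    (hξ : ∀ t : ℝ, ξ t = (NormedSpace.exp (t • (Ap + Bp * Kp))).mulVec ξ₀)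
    (e : ℝ → Fin n → ℝ) (hecont : Continuous e)
    (he1 : ∀ t ∈ Set.Icc (0 : ℝ) T,
      HasDerivWithinAt e (Ap.mulVec (e t)) (Set.Icc (0 : ℝ) T) t)
    (he2 : ∀ t ∈ Set.Icc T ((k : ℝ) * τs),
      HasDerivWithinAt e (Aq.mulVec (e t) + H.mulVec (ξ t)) (Set.Icc T ((k : ℝ) * τs)) t)
    (E : ℝ) (δb γb : ℝ)
    (hδ : δb = ⨆ τ' : Set.Icc (0 : ℝ) τs, opInfNorm (∫ t in (τ' : ℝ)..τs,
      NormedSpace.exp ((τs - t) • Aq) * H *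
        NormedSpace.exp ((t + ((k : ℝ) - 1) * τs) • (Ap + Bp * Kp))))
    (hγ : γb = ⨆ τ' : Set.Icc (0 : ℝ) τs, opInfNorm (NormedSpace.exp ((τs - (τ' : ℝ)) • Aq) *
        NormedSpace.exp ((((k : ℝ) - 1) * τs + (τ' : ℝ)) • Ap))) :
    e ((k : ℝ) * τs) =
      (NormedSpace.exp ((τs - τ) • Aq) *
        NormedSpace.exp ((((k : ℝ) - 1) * τs + τ) • Ap)).mulVec (e 0) +
      (∫ t in τ..τs, NormedSpace.exp ((τs - t) • Aq) * H *
        NormedSpace.exp ((t + ((k : ℝ) - 1) * τs) • (Ap + Bp * Kp))).mulVec ξ₀ ∧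
    (‖e 0‖ ≤ E → ‖e ((k : ℝ) * τs)‖ ≤ δb * ‖ξ₀‖ + γb * E) :=
  stmt_7_general n m Ap Aq Bp Kp H τs hτs k hk T τ hT1 hT2 hτ ξ₀ ξ hξ e he1 he2 E δb γb hδ hγ
end

section
/- Let 0 < ν < 1, ν̄ ≥ 1, η ≥ 1, τ_s > 0, τ_a > 0, N₀ ≥ 0, ĉ > 0, and k₀ ∈ ℕ. Suppose ν̄^{τ_s/τ_a} ν^{1/η − τ_s/τ_a} < 1. Let V : ℕ → ℝ be nonnegative and r : ℕ → ℕ be such that for all M ≥ k₀: r(M) ≤ N₀ + (M − k₀)·τ_s/τ_a and V(M) ≤ ĉ · ν̄^{r(M)} · ν^{(M − k₀)/η − r(M)} · V(k₀). Then V(M) → 0 as M → ∞. -/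
/-- convergence of the multiple Lyapunov function values.
If `V(M) ≤ ĉ ν̄^{r(M)} ν^{(M-k₀)/η - r(M)} V(k₀)` where `r(M)` obeys the
average dwell-time bound and `ν̄^{τs/τa} ν^{1/η - τs/τa} < 1`, then `V(M) → 0`. -/
theorem stmt_14 (ν νb η τs τa N₀ c : ℝ) (k₀ : ℕ)
    (hν0 : 0 < ν) (hν1 : ν < 1) (hνb : 1 ≤ νb) (hη : 1 ≤ η)
    (hτs : 0 < τs) (hτa : 0 < τa) (hN₀ : 0 ≤ N₀) (hc : 0 < c)
    (hcontr : νb ^ (τs / τa) * ν ^ (1 / η - τs / τa) < 1)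
    (V : ℕ → ℝ) (hV0 : ∀ M : ℕ, 0 ≤ V M) (r : ℕ → ℕ)
    (hr : ∀ M : ℕ, k₀ ≤ M → (r M : ℝ) ≤ N₀ + ((M : ℝ) - (k₀ : ℝ)) * τs / τa)
    (hV : ∀ M : ℕ, k₀ ≤ M →
      V M ≤ c * νb ^ (r M : ℝ) * ν ^ (((M : ℝ) - (k₀ : ℝ)) / η - (r M : ℝ)) * V k₀) :
    Filter.Tendsto V Filter.atTop (nhds 0) := by
  have hνb0 : (0:ℝ) < νb := lt_of_lt_of_le one_pos hνb
  set q := νb ^ (τs / τa) * ν ^ (1 / η - τs / τa) with hq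
  have hq0 : 0 < q := mul_pos (Real.rpow_pos_of_pos hνb0 _) (Real.rpow_pos_of_pos hν0 _)
  have hρ0 : (0:ℝ) < νb / ν := div_pos hνb0 hν0
  have hρ : (1:ℝ) ≤ νb / ν := by
    rw [le_div_iff₀ hν0]; linarith
  set C := c * V k₀ * (νb / ν) ^ N₀ with hC
  have key : ∀ M : ℕ, k₀ ≤ M → V M ≤ C * q ^ ((M:ℝ) - (k₀:ℝ)) := by
    intro M hM
    set d := (M:ℝ) - (k₀:ℝ) with hd
    have hR : (r M : ℝ) ≤ N₀ + d * τs / τa := hr M hM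
    have e1 : ∀ x : ℝ, c * νb ^ x * ν ^ (d / η - x) * V k₀
        = c * V k₀ * (ν ^ (d / η) * (νb / ν) ^ x) := by
      intro x
      rw [Real.div_rpow hνb0.le hν0.le, Real.rpow_sub hν0]
      have h1 : ν ^ x ≠ 0 := (Real.rpow_pos_of_pos hν0 x).ne'
      field_simp
    have step1 : V M ≤ c * V k₀ * (ν ^ (d / η) * (νb / ν) ^ (r M : ℝ)) := by
      rw [← e1]; exact hV M hM
    have step2 : ν ^ (d / η) * (νb / ν) ^ (r M : ℝ)
        ≤ ν ^ (d / η) * (νb / ν) ^ (N₀ + d * τs / τa) := by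
      apply mul_le_mul_of_nonneg_left _ (Real.rpow_pos_of_pos hν0 _).le
      exact Real.rpow_le_rpow_of_exponent_le hρ hR
    have e2 : c * V k₀ * (ν ^ (d / η) * (νb / ν) ^ (N₀ + d * τs / τa)) = C * q ^ d := by
      rw [hC, hq]
      have hlog : Real.log (νb / ν) = Real.log νb - Real.log ν :=
        Real.log_div hνb0.ne' hν0.ne'
      rw [Real.mul_rpow (Real.rpow_nonneg hνb0.le _) (Real.rpow_nonneg hν0.le _),
          ← Real.rpow_mul hνb0.le, ← Real.rpow_mul hν0.le]
      simp only [Real.rpow_def_of_pos hν0, Real.rpow_def_of_pos hνb0,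
        Real.rpow_def_of_pos hρ0, hlog, ← Real.exp_add]
      ring_nf
      rw [mul_assoc (c * V k₀), ← Real.exp_add]
      ring_nf
    calc V M ≤ c * V k₀ * (ν ^ (d / η) * (νb / ν) ^ (r M : ℝ)) := step1
      _ ≤ c * V k₀ * (ν ^ (d / η) * (νb / ν) ^ (N₀ + d * τs / τa)) := by
          apply mul_le_mul_of_nonneg_left step2
          exact mul_nonneg hc.le (hV0 k₀)
      _ = C * q ^ d := e2
  have hg : Filter.Tendsto (fun M : ℕ => C * q ^ ((M:ℝ) - (k₀:ℝ))) Filter.atTop (nhds 0) := by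
    have heq : ∀ M : ℕ, C * q ^ ((M:ℝ) - (k₀:ℝ)) = (C * q ^ (-(k₀:ℝ))) * q ^ M := by
      intro M
      rw [show (M:ℝ) - (k₀:ℝ) = -(k₀:ℝ) + (M:ℝ) by ring, Real.rpow_add hq0,
        Real.rpow_natCast]
      ring
    simp only [heq]
    have := (tendsto_pow_atTop_nhds_zero_of_lt_one hq0.le hcontr).const_mul
      (C * q ^ (-(k₀:ℝ)))
    simpa using this
  apply squeeze_zero' (Filter.Eventually.of_forall hV0) _ hg
  exact Filter.eventually_atTop.mpr ⟨k₀, key⟩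
end
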